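/- arXiv:2505.21103 — 2 statements merged into one kernel-verified Lean document; each statement's English description precedes it below -/
import Mathlib

section
/- Let D be a concrete domain satisfying AP. Then D satisfies AP+: for every finite set ℂ of constraint systems over D and every set of variables V such that, for all distinct 𝔅, ℭ ∈ ℂ, the variables occurring in both 𝔅 and ℭ are exactly those in V and 𝔅 and ℭ contain exactly the same constraints over the variables in V, the union ⋃ℂ is satisfiable if and only if every member of ℂ is satisfiable. -/
namespace ALCOSCC

/-! ## Concrete domains and constraint systems -/

/-- A concrete domain: a relational structure over a relational signature. -/
structure ConcreteDomain where
  Dom : Type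
  dom_nonempty : Nonempty Dom
  Pred : Type
  arity : Pred → ℕ
  interp : (P : Pred) → (Fin (arity P) → Dom) → Prop

/-- A single constraint `P(v₁,…,v_k)` over variable type `V`. -/
structure Cstr (D : ConcreteDomain) (V : Type) where
  P : D.Pred
  args : Fin (D.arity P) → V

/-- A constraint system: a set of constraints. -/
abbrev CSys (D : ConcreteDomain) (V : Type) := Set (Cstr D V)

variable {D : ConcreteDomain} {V : Type}

def cstrHolds (h : V → D.Dom) (c : Cstr D V) : Prop := D.interp c.P (h ∘ c.args)

/-- Satisfiability of a constraint system. -/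
def csysSat (S : CSys D V) : Prop := ∃ h : V → D.Dom, ∀ c ∈ S, cstrHolds h c

/-- The variables occurring in a constraint system. -/
def csysVars (S : CSys D V) : Set V := { x | ∃ c ∈ S, ∃ i, c.args i = x }

/-- JEPD: for every arity `k` for which `D` has `k`-ary predicates, the interpretations
of the `k`-ary predicates partition `D^k` (i.e. every tuple satisfies exactly one of them). -/
def JEPD (D : ConcreteDomain) : Prop :=
  ∀ k : ℕ, (∃ P : D.Pred, D.arity P = k) →
    ∀ t : Fin k → D.Dom,
      ∃! P : D.Pred, ∃ h : D.arity P = k, D.interp P (fun i => t (Fin.cast h i))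

/-- Quantifier-free, equality-free first-order formulas over the signature of `D`,
with variables of type `V`. -/
inductive QFF (D : ConcreteDomain) (V : Type) : Type where
  | atom (P : D.Pred) (args : Fin (D.arity P) → V)
  | not (φ : QFF D V)
  | and (φ ψ : QFF D V)
  | or (φ ψ : QFF D V)

def QFF.Eval : QFF D V → (V → D.Dom) → Prop
  | .atom P args, h => D.interp P (h ∘ args)
  | .not φ, h => ¬ φ.Eval h
  | .and φ ψ, h => φ.Eval h ∧ ψ.Eval h
  | .or φ ψ, h => φ.Eval h ∨ ψ.Eval h

/-- JD: equality on `D` is definable by a quantifier-free, equality-free first-order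
formula over the signature of `D` (with two variables, `false` ↦ first, `true` ↦ second). -/
def JD (D : ConcreteDomain) : Prop :=
  ∃ φ : QFF D Bool, ∀ a b : D.Dom, φ.Eval (fun v => bif v then b else a) ↔ a = b

/-- AP (amalgamation): if two constraint systems contain exactly the same constraints
over the variables they share, their union is satisfiable iff both are. -/
def AP (D : ConcreteDomain) : Prop :=
  ∀ (V : Type) (B C : CSys D V),
    (∀ c : Cstr D V, (∀ i, c.args i ∈ csysVars B ∩ csysVars C) → (c ∈ B ↔ c ∈ C)) →
    (csysSat (B ∪ C) ↔ (csysSat B ∧ csysSat C))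

/-- A patchwork concrete domain. -/
def Patchwork (D : ConcreteDomain) : Prop := JEPD D ∧ JD D ∧ AP D

/-- Homomorphism ω-compactness: a countable constraint system is satisfiable whenever
all of its finite subsystems are. -/
def HomOmegaCompact (D : ConcreteDomain) : Prop :=
  ∀ (V : Type) (S : CSys D V), S.Countable →
    (∀ F : CSys D V, F ⊆ S → F.Finite → csysSat F) → csysSat S



open ALCOSCC in
/-- A concrete domain satisfying AP also satisfies AP⁺: for every finite
set `𝒞` of constraint systems and every set of variables `Vs` such that any two distinct
members of `𝒞` share exactly the variables in `Vs` and contain exactly the same constraints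
over the variables in `Vs`, the union `⋃₀ 𝒞` is satisfiable iff every member of `𝒞` is. -/
theorem ap_implies_ap_plus
    (D : ConcreteDomain) (hAP : AP D)
    (V : Type) (𝒞 : Set (CSys D V)) (hfin : 𝒞.Finite) (Vs : Set V)
    (hshared : ∀ B ∈ 𝒞, ∀ C ∈ 𝒞, B ≠ C →
      (csysVars B ∩ csysVars C = Vs ∧
        ∀ c : Cstr D V, (∀ i, c.args i ∈ Vs) → (c ∈ B ↔ c ∈ C))) :
    csysSat (⋃₀ 𝒞) ↔ ∀ B ∈ 𝒞, csysSat B := by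
  revert hshared
  refine Set.Finite.induction_on 𝒞 hfin ?_ ?_
  · intro _
    obtain ⟨d⟩ := D.dom_nonempty
    simp only [Set.sUnion_empty, Set.mem_empty_iff_false]
    constructor
    · intro _ B h; exact h.elim
    · intro _; exact ⟨fun _ => d, fun c hc => hc.elim⟩
  · intro B S hB hSfin ih hshared
    rcases S.eq_empty_or_nonempty with rfl | ⟨C₀, hC₀⟩
    · simp [csysSat]
    · have hBin : B ∈ insert B S := Set.mem_insert _ _
      have hsharedS : ∀ B' ∈ S, ∀ C ∈ S, B' ≠ C →
          (csysVars B' ∩ csysVars C = Vs ∧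
            ∀ c : Cstr D V, (∀ i, c.args i ∈ Vs) → (c ∈ B' ↔ c ∈ C)) := by
        intro B' hB' C hC hne
        exact hshared B' (Set.mem_insert_of_mem _ hB') C (Set.mem_insert_of_mem _ hC) hne
      have hmem : ∀ c : Cstr D V,
          (∀ i, c.args i ∈ csysVars B ∩ csysVars (⋃₀ S)) → (c ∈ B ↔ c ∈ ⋃₀ S) := by
        intro c hc
        have hVs : ∀ i, c.args i ∈ Vs := by
          intro i
          obtain ⟨hiB, hiU⟩ := hc i
          obtain ⟨c', ⟨C, hCS, hc'C⟩, j, hj⟩ := hiU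
          have hne : B ≠ C := fun h => hB (h ▸ hCS)
          have heq := (hshared B hBin C (Set.mem_insert_of_mem _ hCS) hne).1
          rw [← heq]
          exact ⟨hiB, ⟨c', hc'C, j, hj⟩⟩
        constructor
        · intro hcB
          have hne : B ≠ C₀ := fun h => hB (h ▸ hC₀)
          exact ⟨C₀, hC₀,
            ((hshared B hBin C₀ (Set.mem_insert_of_mem _ hC₀) hne).2 c hVs).1 hcB⟩
        · rintro ⟨C, hCS, hcC⟩
          have hne : B ≠ C := fun h => hB (h ▸ hCS)
          exact ((hshared B hBin C (Set.mem_insert_of_mem _ hCS) hne).2 c hVs).2 hcC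
      rw [Set.sUnion_insert, hAP V B (⋃₀ S) hmem, ih hsharedS]
      simp [Set.forall_mem_insert]

end ALCOSCC
end

section
/- The concrete domain Q = (ℚ, <, =, >) is homomorphism ω-compact: a countable constraint system over Q (a countable set of constraints of the forms u < w, u = w, u > w between variables) has a solution, i.e., an assignment of rational numbers to its variables satisfying every constraint, if and only if every finite subsystem of it has a solution. -/
namespace ALCOSCC

variable {D : ConcreteDomain} {V : Type}

/-- The concrete domain `𝔔 = (ℚ, <, =, >)`. -/
def QD : ConcreteDomain where
  Dom := ℚ
  dom_nonempty := ⟨0⟩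
  Pred := Fin 3
  arity := fun _ => 2
  interp := fun P t => ![t 0 < t 1, t 0 = t 1, t 0 > t 1] P

/-- one-step "≤" relation induced by a constraint system over QD -/
def leStep (S : CSys QD V) (x y : V) : Prop :=
  ∃ c ∈ S, ((c.P = (0 : Fin 3) ∨ c.P = (1 : Fin 3)) ∧ c.args (0 : Fin 2) = x ∧ c.args (1 : Fin 2) = y) ∨
           ((c.P = (1 : Fin 3) ∨ c.P = (2 : Fin 3)) ∧ c.args (0 : Fin 2) = y ∧ c.args (1 : Fin 2) = x)

lemma holds_le {S : CSys QD V} {x y : V} (hs : leStep S x y) :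
    ∃ c ∈ S, ∀ h : V → ℚ, cstrHolds h c → h x ≤ h y := by
  obtain ⟨c, hc, hcase⟩ := hs
  refine ⟨c, hc, fun h hh => ?_⟩
  have hh' : (![((h ∘ c.args) (0 : Fin 2) < (h ∘ c.args) (1 : Fin 2) : Prop),
      (h ∘ c.args) (0 : Fin 2) = (h ∘ c.args) (1 : Fin 2), (h ∘ c.args) (0 : Fin 2) > (h ∘ c.args) (1 : Fin 2)] c.P) := hh
  rcases hcase with ⟨hP, h0, h1⟩ | ⟨hP, h0, h1⟩ <;>
    rcases hP with hP | hP <;>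
      simp only [hP, Matrix.cons_val_zero, Matrix.cons_val_one, Matrix.head_cons,
        Matrix.cons_val_two, Matrix.tail_cons, Function.comp_apply, h0, h1] at hh' <;>
      [(subst h0 h1; exact hh'.le); (subst h0 h1; exact hh'.le); (subst h0 h1; exact hh'.ge); (subst h0 h1; exact hh'.le)]

lemma chain_le {S : CSys QD V} {x y : V}
    (hr : Relation.ReflTransGen (leStep S) x y) :
    ∃ F : CSys QD V, F ⊆ S ∧ F.Finite ∧
      ∀ h : V → ℚ, (∀ c ∈ F, cstrHolds h c) → h x ≤ h y := by
  induction hr with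
  | refl => exact ⟨∅, by simp, Set.finite_empty, fun h _ => le_refl _⟩
  | tail _ hstep ih =>
    obtain ⟨F, hFS, hFfin, hF⟩ := ih
    obtain ⟨c, hcS, hc⟩ := holds_le hstep
    refine ⟨insert c F, Set.insert_subset hcS hFS, hFfin.insert c, fun h hh => ?_⟩
    exact le_trans (hF h fun d hd => hh d (Set.mem_insert_of_mem _ hd))
      (hc h (hh c (Set.mem_insert _ _)))


/-- The concrete domain `(ℚ, <, =, >)` is homomorphism ω-compact: a
countable constraint system over it is satisfiable iff every finite subsystem is. -/
theorem rat_hom_omega_compact :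
    ∀ (V : Type) (S : CSys QD V), S.Countable →
      (csysSat S ↔ ∀ F : CSys QD V, F ⊆ S → F.Finite → csysSat F) := by
  intro V S hcnt
  constructor
  · rintro ⟨h, hh⟩ F hFS _
    exact ⟨h, fun c hc => hh c (hFS hc)⟩
  · intro hfin
    -- variables are countable
    have hWcnt : (csysVars S).Countable := by
      have : csysVars S ⊆ ⋃ c ∈ S, Set.range c.args := by
        rintro x ⟨c, hc, i, hi⟩
        exact Set.mem_biUnion hc ⟨i, hi⟩
      exact (hcnt.biUnion (fun c _ => (Set.finite_range c.args).countable)).mono this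
    haveI := hWcnt.to_subtype
    set W := {x // x ∈ csysVars S} with hW
    letI : Preorder W :=
      { le := fun a b => Relation.ReflTransGen (leStep S) a.1 b.1
        le_refl := fun a => Relation.ReflTransGen.refl
        le_trans := fun a b c => Relation.ReflTransGen.trans }
    haveI : IsPreorder W (· ≤ ·) := { refl := le_refl, trans := fun _ _ _ => le_trans }
    haveI : Countable (Antisymmetrization W (· ≤ ·)) := Quotient.countable
    haveI : Countable (LinearExtension (Antisymmetrization W (· ≤ ·))) :=
      (inferInstance : Countable (Antisymmetrization W (· ≤ ·)))
    obtain ⟨e⟩ := Order.embedding_from_countable_to_dense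
      (α := LinearExtension (Antisymmetrization W (· ≤ ·))) (β := ℚ)
    set f : W → ℚ := fun w => e (toLinearExtension (toAntisymmetrization (· ≤ ·) w)) with hf
    have fmono : ∀ {a b : W}, a ≤ b → f a ≤ f b := fun hab =>
      e.le_iff_le.2 (toLinearExtension.monotone
        (toAntisymmetrization_le_toAntisymmetrization_iff.2 hab))
    have fstrict : ∀ {a b : W}, a ≤ b → ¬ b ≤ a → f a < f b := by
      intro a b hab hba
      have hlt : toAntisymmetrization (· ≤ ·) a < toAntisymmetrization (· ≤ ·) b :=
        toAntisymmetrization_lt_toAntisymmetrization_iff.2 ⟨hab, hba⟩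
      have : toLinearExtension (toAntisymmetrization (· ≤ ·) a) <
          toLinearExtension (toAntisymmetrization (· ≤ ·) b) :=
        (toLinearExtension.monotone.strictMono_of_injective fun _ _ h => h) hlt
      exact e.lt_iff_lt.2 this
    have feq : ∀ {a b : W}, a ≤ b → b ≤ a → f a = f b := by
      intro a b hab hba
      simp only [hf]
      congr 1
      exact Quotient.sound ⟨hab, hba⟩
    classical
    refine ⟨fun v => if hv : v ∈ csysVars S then f ⟨v, hv⟩ else (0:ℚ), ?_⟩
    intro c hc
    have h0 : c.args (0 : Fin 2) ∈ csysVars S := ⟨c, hc, (0 : Fin 2), rfl⟩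
    have h1 : c.args (1 : Fin 2) ∈ csysVars S := ⟨c, hc, (1 : Fin 2), rfl⟩
    -- not-reverse-reachable lemma
    have key : ∀ x y : V, (∃ d ∈ S, ∀ h : V → ℚ, cstrHolds h d → h x < h y) →
        ¬ Relation.ReflTransGen (leStep S) y x := by
      rintro x y ⟨d, hdS, hd⟩ hr
      obtain ⟨F, hFS, hFfin, hF⟩ := chain_le hr
      obtain ⟨h, hh⟩ := hfin (insert d F) (Set.insert_subset hdS hFS) (hFfin.insert d)
      exact absurd (hd h (hh d (Set.mem_insert _ _)))
        (not_lt.2 (hF h fun c hc => hh c (Set.mem_insert_of_mem _ hc)))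
    show (![_, _, _] c.P : Prop)
    have hP : c.P = (0 : Fin 3) ∨ c.P = (1 : Fin 3) ∨ c.P = (2 : Fin 3) := by
      have h3 : (c.P : Fin 3).val < 3 := (c.P : Fin 3).isLt
      have hv : (c.P : Fin 3).val = 0 ∨ (c.P : Fin 3).val = 1 ∨ (c.P : Fin 3).val = 2 := by
        omega
      rcases hv with h | h | h
      · exact Or.inl (Fin.ext h)
      · exact Or.inr (Or.inl (Fin.ext h))
      · exact Or.inr (Or.inr (Fin.ext h))
    rcases hP with hP | hP | hP
    · -- strict <
      have hstep : leStep S (c.args (0 : Fin 2)) (c.args (1 : Fin 2)) := ⟨c, hc, Or.inl ⟨Or.inl hP, rfl, rfl⟩⟩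
      have hstrict : ∃ d ∈ S, ∀ h : V → ℚ, cstrHolds h d → h (c.args (0 : Fin 2)) < h (c.args (1 : Fin 2)) := by
        refine ⟨c, hc, fun h hh => ?_⟩
        have hh' : (![((h ∘ c.args) (0 : Fin 2) < (h ∘ c.args) (1 : Fin 2) : Prop),
            (h ∘ c.args) (0 : Fin 2) = (h ∘ c.args) (1 : Fin 2), (h ∘ c.args) (0 : Fin 2) > (h ∘ c.args) (1 : Fin 2)] c.P) := hh
        rw [hP] at hh'
        exact hh'
      have hle : (⟨c.args (0 : Fin 2), h0⟩ : W) ≤ ⟨c.args (1 : Fin 2), h1⟩ := Relation.ReflTransGen.single hstep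
      have hnle : ¬ ((⟨c.args (1 : Fin 2), h1⟩ : W) ≤ ⟨c.args (0 : Fin 2), h0⟩) := key _ _ hstrict
      simp only [hP, Matrix.cons_val_zero, Matrix.cons_val_one, Matrix.head_cons,
        Function.comp_apply]
      simpa [h0, h1, Function.comp_def] using fstrict hle hnle
    · -- equality
      have hle : (⟨c.args (0 : Fin 2), h0⟩ : W) ≤ ⟨c.args (1 : Fin 2), h1⟩ :=
        Relation.ReflTransGen.single ⟨c, hc, Or.inl ⟨Or.inr hP, rfl, rfl⟩⟩
      have hge : (⟨c.args (1 : Fin 2), h1⟩ : W) ≤ ⟨c.args (0 : Fin 2), h0⟩ :=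
        Relation.ReflTransGen.single ⟨c, hc, Or.inr ⟨Or.inl hP, rfl, rfl⟩⟩
      simp only [hP, Matrix.cons_val_one, Matrix.head_cons, Function.comp_apply]
      simpa [h0, h1, Function.comp_def] using feq hle hge
    · -- strict >
      have hstep : leStep S (c.args (1 : Fin 2)) (c.args (0 : Fin 2)) := ⟨c, hc, Or.inr ⟨Or.inr hP, rfl, rfl⟩⟩
      have hstrict : ∃ d ∈ S, ∀ h : V → ℚ, cstrHolds h d → h (c.args (1 : Fin 2)) < h (c.args (0 : Fin 2)) := by
        refine ⟨c, hc, fun h hh => ?_⟩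
        have hh' : (![((h ∘ c.args) (0 : Fin 2) < (h ∘ c.args) (1 : Fin 2) : Prop),
            (h ∘ c.args) (0 : Fin 2) = (h ∘ c.args) (1 : Fin 2), (h ∘ c.args) (0 : Fin 2) > (h ∘ c.args) (1 : Fin 2)] c.P) := hh
        rw [hP] at hh'
        exact hh'
      have hle : (⟨c.args (1 : Fin 2), h1⟩ : W) ≤ ⟨c.args (0 : Fin 2), h0⟩ := Relation.ReflTransGen.single hstep
      have hnle : ¬ ((⟨c.args (0 : Fin 2), h0⟩ : W) ≤ ⟨c.args (1 : Fin 2), h1⟩) := key _ _ hstrict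
      simp only [hP, Matrix.cons_val_two, Matrix.tail_cons, Matrix.head_cons,
        Function.comp_apply]
      simpa [h0, h1, Function.comp_def] using fstrict hle hnle


end ALCOSCC
end
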